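/- Let A ∈ ℝ^{m×m} with ‖A‖_∞ < 1 and 0 < c < 1. Then Σ_{n=0}^∞ c^n·Σ_{i=0}^n (n−i)·A^i converges and equals (I − A)^{-2}·(A·(I − c·A)^{-1} − (1/(1−c))·A + (c/(1−c)²)·(I − A)). -/

import Mathlib

open Matrix Finset

attribute [local instance] Matrix.linftyOpNormedRing Matrix.linftyOpNormedAlgebra

theorem series_of_weighted_partial_geom_sums
    (m : ℕ) (A : Matrix (Fin m) (Fin m) ℝ)
    (hA : ∀ i, ∑ j, |A i j| < 1) (c : ℝ) (hc0 : 0 < c) (hc1 : c < 1) :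
    HasSum (fun n : ℕ => c ^ n • ∑ i ∈ Finset.range (n + 1), ((n : ℝ) - i) • A ^ i)
      (((1 - A)⁻¹) ^ 2 * (A * (1 - c • A)⁻¹ - (1 / (1 - c)) • A
        + (c / (1 - c) ^ 2) • (1 - A))) := by
  haveI : CompleteSpace (Matrix (Fin m) (Fin m) ℝ) := FiniteDimensional.complete ℝ _
  have hAnorm : ‖A‖ < 1 := by
    rw [Matrix.linfty_opNorm_def]
    have h : (Finset.univ.sup fun i : Fin m => ∑ j, ‖A i j‖₊) < 1 := by
      rw [Finset.sup_lt_iff (by norm_num : (⊥ : NNReal) < 1)]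
      intro i _
      have := hA i
      rw [← NNReal.coe_lt_coe]
      push_cast
      simpa [Real.norm_eq_abs] using this
    exact_mod_cast h
  have hcA : ‖c • A‖ < 1 := by
    rw [norm_smul, Real.norm_eq_abs, abs_of_pos hc0]
    nlinarith [norm_nonneg A]
  haveI hinv : Invertible (1 - A) := (Units.oneSub A hAnorm).invertible
  -- abbreviations
  set S : ℕ → Matrix (Fin m) (Fin m) ℝ :=
    fun n => ∑ i ∈ Finset.range (n + 1), ((n : ℝ) - i) • A ^ i with hS
  set g : ℕ → Matrix (Fin m) (Fin m) ℝ :=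
    fun n => A ^ (n + 1) - A + (n : ℝ) • (1 - A) with hg
  -- geometric sum identity
  have hgeom : ∀ k : ℕ, (1 - A) * ∑ i ∈ Finset.range k, A ^ i = 1 - A ^ k := by
    intro k
    have hcomm : A * ∑ i ∈ Finset.range k, A ^ i = (∑ i ∈ Finset.range k, A ^ i) * A := by
      rw [Finset.mul_sum, Finset.sum_mul]
      refine Finset.sum_congr rfl fun i _ => ?_
      rw [← pow_succ, ← pow_succ']
    have h := geom_sum_mul A k
    calc (1 - A) * ∑ i ∈ Finset.range k, A ^ i
        = (∑ i ∈ Finset.range k, A ^ i) - A * ∑ i ∈ Finset.range k, A ^ i := by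
          rw [sub_mul, one_mul]
      _ = (∑ i ∈ Finset.range k, A ^ i) - (∑ i ∈ Finset.range k, A ^ i) * A := by rw [hcomm]
      _ = -((∑ i ∈ Finset.range k, A ^ i) * (A - 1)) := by noncomm_ring
      _ = 1 - A ^ k := by rw [h]; noncomm_ring
  -- key identity
  have hkey : ∀ n : ℕ, (1 - A) ^ 2 * S n = g n := by
    intro n
    induction n with
    | zero => simp [hS, hg]
    | succ n ih =>
      have hstep : S (n + 1) = S n + ∑ i ∈ Finset.range (n + 1), A ^ i := by
        rw [hS]
        simp only
        rw [Finset.sum_range_succ]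
        have : ((n + 1 : ℕ) : ℝ) - ((n + 1 : ℕ) : ℝ) = 0 := by ring
        push_cast
        rw [sub_self, zero_smul, add_zero, ← Finset.sum_add_distrib]
        refine Finset.sum_congr rfl fun i _ => ?_
        have hcoef : ((n : ℝ) + 1 - i) = ((n : ℝ) - i) + 1 := by ring
        rw [hcoef, add_smul, one_smul]
      rw [hstep, mul_add, ih]
      have h2 : (1 - A) ^ 2 * ∑ i ∈ Finset.range (n + 1), A ^ i
          = (1 - A) * (1 - A ^ (n + 1)) := by
        rw [sq, mul_assoc, hgeom]
      rw [h2, hg]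
      simp only
      push_cast
      rw [one_sub_mul, mul_one_sub, ← pow_succ']
      have : ((n : ℝ) + 1) • (1 - A) = (n : ℝ) • (1 - A) + (1 - A) := by
        rw [add_smul, one_smul]
      rw [this]
      abel
  -- inverse facts
  set B : Matrix (Fin m) (Fin m) ℝ := ((1 - A)⁻¹) ^ 2 with hB
  have hB1 : B * (1 - A) ^ 2 = 1 := by
    rw [hB, ← Matrix.invOf_eq_nonsing_inv, ← invOf_pow, invOf_mul_self]
  have hfB : ∀ n : ℕ, c ^ n • S n = B * (c ^ n • g n) := by
    intro n
    rw [mul_smul_comm, ← hkey n, ← mul_assoc, hB1, one_mul]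
  -- the three geometric series
  have h1 : HasSum (fun n : ℕ => A * (c • A) ^ n) (A * (1 - c • A)⁻¹) := by
    rw [Matrix.nonsing_inv_eq_ringInverse]
    exact (hasSum_geom_series_inverse _ hcA).mul_left A
  have h1' : HasSum (fun n : ℕ => c ^ n • A ^ (n + 1)) (A * (1 - c • A)⁻¹) := by
    refine h1.congr_fun fun n => ?_
    rw [smul_pow, mul_smul_comm, pow_succ']
  have h2 : HasSum (fun n : ℕ => c ^ n • A) ((1 / (1 - c)) • A) := by
    have := (hasSum_geometric_of_lt_one hc0.le hc1).smul_const A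
    simpa [one_div] using this
  have h3 : HasSum (fun n : ℕ => c ^ n • ((n : ℝ) • (1 - A)))
      ((c / (1 - c) ^ 2) • (1 - A)) := by
    have hc : ‖c‖ < 1 := by rw [Real.norm_eq_abs, abs_of_pos hc0]; exact hc1
    have := (hasSum_coe_mul_geometric_of_norm_lt_one hc).smul_const (1 - A)
    refine this.congr_fun fun n => ?_
    rw [smul_smul, mul_comm]
  have hg' : HasSum (fun n : ℕ => c ^ n • g n)
      (A * (1 - c • A)⁻¹ - (1 / (1 - c)) • A + (c / (1 - c) ^ 2) • (1 - A)) := by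
    refine ((h1'.sub h2).add h3).congr_fun fun n => ?_
    rw [hg]
    simp only [smul_sub, smul_add]
  have := hg'.mul_left B
  refine this.congr_fun fun n => ?_
  exact hfB n
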